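/- Let 1 < p ≤ 2. There exists a constant C_p > 0, depending only on p, such that for every nonnegative f ∈ L^p(X,μ) and every t > 0: ( ∫_X ∫_X p_t(x,y) |f(x) − f(y)|^p dμ(x) dμ(y) )^{1/p} ≤ C_p · ‖f‖_{L^p(X,μ)}^{1/2} · ‖P_t f − f‖_{L^p(X,μ)}^{1/2}. -/

import Mathlib

open MeasureTheory ENNReal Metric Filter

noncomputable section

namespace BesovDirichlet

variable {X : Type*} [MeasurableSpace X]

/-- A heat kernel on a measure space: jointly measurable, nonnegative, symmetric,
satisfying the semigroup property and conservative. -/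
structure IsHeatKernel (μ : Measure X) (K : ℝ → X → X → ℝ) : Prop where
  measurable : ∀ t : ℝ, Measurable fun xy : X × X => K t xy.1 xy.2
  nonneg : ∀ (t : ℝ) (x y : X), 0 ≤ K t x y
  symm : ∀ (t : ℝ) (x y : X), K t x y = K t y x
  semigroup : ∀ s t : ℝ, 0 < s → 0 < t →
    ∀ᵐ xy ∂(μ.prod μ), (∫ z, K t xy.1 z * K s z xy.2 ∂μ) = K (t + s) xy.1 xy.2
  conservative : ∀ t : ℝ, 0 < t → ∀ᵐ x ∂μ, (∫ y, K t x y ∂μ) = 1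

/-- The heat semigroup `P_t f (x) = ∫ p_t(x,y) f(y) dμ(y)`. -/
def heatOp (μ : Measure X) (K : ℝ → X → X → ℝ) (t : ℝ) (f : X → ℝ) (x : X) : ℝ :=
  ∫ y, K t x y * f y ∂μ

/-- The double integral `∫∫ |f(x) − f(y)|^p p_t(x,y) dμ(x) dμ(y)` as an extended real. -/
def besovEnergy (μ : Measure X) (K : ℝ → X → X → ℝ) (p t : ℝ) (f : X → ℝ) : ℝ≥0∞ :=
  ∫⁻ x, (∫⁻ y, ENNReal.ofReal (|f x - f y| ^ p) * ENNReal.ofReal (K t x y) ∂μ) ∂μ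

/-- The heat-semigroup Besov seminorm `‖f‖_{p,α}`. -/
def besovSeminorm (μ : Measure X) (K : ℝ → X → X → ℝ) (p α : ℝ) (f : X → ℝ) : ℝ≥0∞ :=
  ⨆ (t : ℝ) (_ : 0 < t), ENNReal.ofReal (t ^ (-α)) * besovEnergy μ K p t f ^ (1 / p)

/-- Membership in the Besov space `B^{p,α}(X)`. -/
def MemBesov (μ : Measure X) (K : ℝ → X → X → ℝ) (p α : ℝ) (f : X → ℝ) : Prop :=
  MemLp f (ENNReal.ofReal p) μ ∧ besovSeminorm μ K p α f ≠ ∞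

/-!
For `a, b ≥ 0` and `1 < p ≤ 2`, the tangent-line inequality for the concave map `s ↦ s ^ (p - 1)`
gives `(p - 1) (a - b)² (a + b)^(p - 2) ≤ (a - b) (a^(p-1) - b^(p-1))`, hence
`|a - b|^p ≤ ((a - b) (a^(p-1) - b^(p-1)) / (p - 1))^(p/2) · ((a + b)^p)^((2-p)/2)`.
Integrating against `p_t(x, y) dμ(x) dμ(y)` and applying Hölder's inequality with exponents
`2/p` and `2/(2-p)` bounds the energy by `(𝓔 / (p - 1))^(p/2) (2^p ‖f‖_p^p)^((2-p)/2)`, where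
`𝓔 = ∬ p_t(x,y) (f(x) - f(y)) (f(x)^(p-1) - f(y)^(p-1))`. Since `p_t` is symmetric and
conservative, `𝓔 = 2 ∫ f^(p-1) (f - P_t f) dμ ≤ 2 ‖f‖_p^(p-1) ‖P_t f - f‖_p`, again by Hölder.
This gives the bound with `C_p = (2^(3-p) / (p - 1))^(1/2)`.
-/

theorem mul_rpow_sub_one_mul_sub_le_rpow_sub_rpow {q a b : ℝ} (hq0 : 0 ≤ q) (hq1 : q ≤ 1)
    (hb : 0 ≤ b) (hba : b ≤ a) : q * a ^ (q - 1) * (a - b) ≤ a ^ q - b ^ q := by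
  rcases hb.trans hba |>.eq_or_lt with ha | ha
  · obtain rfl : b = 0 := le_antisymm (ha ▸ hba) hb
    simp [← ha]
  have bernoulli := rpow_one_add_le_one_add_mul_self
    (by linarith [div_nonneg hb ha.le] : -1 ≤ b / a - 1) hq0 hq1
  rw [add_sub_cancel, Real.div_rpow hb ha.le, div_le_iff₀ (by positivity)] at bernoulli
  have hpow : a ^ q = a ^ (q - 1) * a := by
    rw [← Real.rpow_add_one ha.ne', sub_add_cancel]
  rw [hpow] at bernoulli ⊢
  field_simp at bernoulli
  linarith

theorem sub_sq_mul_add_rpow_le {p a b : ℝ} (hp1 : 1 < p) (hp2 : p ≤ 2) (hb : 0 ≤ b)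
    (hba : b ≤ a) : (p - 1) * ((a - b) ^ 2 * (a + b) ^ (p - 2)) ≤
      (a - b) * (a ^ (p - 1) - b ^ (p - 1)) := by
  rcases hb.trans hba |>.eq_or_lt with ha | ha
  · obtain rfl : b = 0 := le_antisymm (ha ▸ hba) hb
    simp [← ha]
  have tangent := mul_rpow_sub_one_mul_sub_le_rpow_sub_rpow (q := p - 1) (by linarith)
    (by linarith) hb hba
  have hmono : (a + b) ^ (p - 2) ≤ a ^ (p - 2) :=
    Real.rpow_le_rpow_of_nonpos ha (by linarith) (by linarith)
  rw [show p - 1 - 1 = p - 2 by ring] at tangent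
  have hab : 0 ≤ a - b := sub_nonneg.2 hba
  calc (p - 1) * ((a - b) ^ 2 * (a + b) ^ (p - 2))
      ≤ (p - 1) * ((a - b) ^ 2 * a ^ (p - 2)) := by gcongr
    _ = (a - b) * ((p - 1) * a ^ (p - 2) * (a - b)) := by ring
    _ ≤ (a - b) * (a ^ (p - 1) - b ^ (p - 1)) := by gcongr

theorem abs_sub_rpow_le_of_le {p a b : ℝ} (hp1 : 1 < p) (hp2 : p ≤ 2) (hb : 0 ≤ b)
    (hba : b ≤ a) : |a - b| ^ p ≤
      ((a - b) * (a ^ (p - 1) - b ^ (p - 1)) / (p - 1)) ^ (p / 2) *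
        ((a + b) ^ p) ^ ((2 - p) / 2) := by
  have hab : 0 ≤ a - b := sub_nonneg.2 hba
  rcases (add_nonneg (hb.trans hba) hb).eq_or_lt with hsum | hsum
  · obtain rfl : b = 0 := by linarith
    obtain rfl : a = 0 := by linarith
    simp [Real.zero_rpow (by linarith : p ≠ 0)]
    positivity
  have split : |a - b| ^ p =
      ((a - b) ^ 2 * (a + b) ^ (p - 2)) ^ (p / 2) * ((a + b) ^ p) ^ ((2 - p) / 2) := by
    rw [abs_of_nonneg hab, Real.mul_rpow (by positivity) (by positivity), mul_assoc,
      ← Real.rpow_natCast, ← Real.rpow_mul hab, ← Real.rpow_mul hsum.le,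
      ← Real.rpow_mul hsum.le, ← Real.rpow_add hsum,
      show ((2 : ℕ) : ℝ) * (p / 2) = p by push_cast; ring,
      show (p - 2) * (p / 2) + p * ((2 - p) / 2) = 0 by ring, Real.rpow_zero, mul_one]
  rw [split]
  gcongr
  rw [le_div_iff₀ (by linarith), mul_comm]
  exact sub_sq_mul_add_rpow_le hp1 hp2 hb hba

theorem sub_mul_rpow_sub_rpow_nonneg {q a b : ℝ} (hq : 0 ≤ q) (ha : 0 ≤ a) (hb : 0 ≤ b) :
    0 ≤ (a - b) * (a ^ q - b ^ q) := by
  rcases le_total b a with hba | hab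
  · exact mul_nonneg (sub_nonneg.2 hba) (sub_nonneg.2 (Real.rpow_le_rpow hb hba hq))
  · exact mul_nonneg_of_nonpos_of_nonpos (sub_nonpos.2 hab)
      (sub_nonpos.2 (Real.rpow_le_rpow ha hab hq))

theorem abs_sub_rpow_le {p a b : ℝ} (hp1 : 1 < p) (hp2 : p ≤ 2) (ha : 0 ≤ a) (hb : 0 ≤ b) :
    |a - b| ^ p ≤ ((a - b) * (a ^ (p - 1) - b ^ (p - 1)) / (p - 1)) ^ (p / 2) *
      ((a + b) ^ p) ^ ((2 - p) / 2) := by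
  rcases le_total b a with hba | hab
  · exact abs_sub_rpow_le_of_le hp1 hp2 hb hba
  · have h := abs_sub_rpow_le_of_le hp1 hp2 ha hab
    rwa [abs_sub_comm, add_comm, ← neg_sub a b, ← neg_sub (a ^ (p - 1)), neg_mul_neg] at h

theorem ofReal_abs_sub_rpow_le {p a b : ℝ} (hp1 : 1 < p) (hp2 : p ≤ 2) (ha : 0 ≤ a)
    (hb : 0 ≤ b) : ENNReal.ofReal (|a - b| ^ p) ≤
      ENNReal.ofReal ((a - b) * (a ^ (p - 1) - b ^ (p - 1)) / (p - 1)) ^ (p / 2) *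
        ENNReal.ofReal ((a + b) ^ p) ^ ((2 - p) / 2) := by
  have hG : 0 ≤ (a - b) * (a ^ (p - 1) - b ^ (p - 1)) / (p - 1) :=
    div_nonneg (sub_mul_rpow_sub_rpow_nonneg (by linarith) ha hb) (by linarith)
  rw [ENNReal.ofReal_rpow_of_nonneg hG (by linarith),
    ENNReal.ofReal_rpow_of_nonneg (by positivity) (by linarith),
    ← ENNReal.ofReal_mul (by positivity)]
  exact ENNReal.ofReal_le_ofReal (abs_sub_rpow_le hp1 hp2 ha hb)

theorem rpow_eq_rpow_sub_one_mul {p a : ℝ} (hp : p ≠ 0) (ha : 0 ≤ a) :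
    a ^ p = a ^ (p - 1) * a := by
  conv_lhs => rw [← sub_add_cancel p 1]
  rw [Real.rpow_add' ha (by simpa using hp), Real.rpow_one]

theorem lintegral_enorm_rpow_eq_eLpNorm_rpow {μ : Measure X} {p : ℝ} (hp : 0 < p) (g : X → ℝ) :
    ∫⁻ x, ‖g x‖ₑ ^ p ∂μ = eLpNorm g (ENNReal.ofReal p) μ ^ p := by
  rw [eLpNorm_eq_eLpNorm' (by simpa using hp) ofReal_ne_top, toReal_ofReal hp.le,
    lintegral_rpow_enorm_eq_rpow_eLpNorm' hp]

theorem lintegral_enorm_rpow_sub_one_mul_le {μ : Measure X} {p : ℝ} (hp : 1 ≤ p) {u v : X → ℝ}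
    (hu : AEMeasurable u μ) (hv : AEMeasurable v μ) :
    ∫⁻ x, ‖u x‖ₑ ^ (p - 1) * ‖v x‖ₑ ∂μ ≤
      eLpNorm u (ENNReal.ofReal p) μ ^ (p - 1) * eLpNorm v (ENNReal.ofReal p) μ := by
  have hp0 : 0 < p := by linarith
  have holder := ENNReal.lintegral_mul_norm_pow_le (μ := μ) (hu.enorm.pow_const p)
    (hv.enorm.pow_const p) (p := (p - 1) / p) (q := 1 / p) (by positivity) (by positivity)
    (by field_simp; ring)
  simp only [← ENNReal.rpow_mul, lintegral_enorm_rpow_eq_eLpNorm_rpow hp0] at holder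
  rw [show p * ((p - 1) / p) = p - 1 by field_simp, show p * (1 / p) = 1 by field_simp] at holder
  simpa only [ENNReal.rpow_one] using holder

theorem ofReal_le_lintegral_add_enorm_integral_sub {μ : Measure X} {g : X → ℝ}
    (hg : AEStronglyMeasurable g μ) (hg0 : 0 ≤ g) (c : ℝ) :
    ENNReal.ofReal c ≤ ∫⁻ y, ENNReal.ofReal (g y) ∂μ + ‖(∫ y, g y ∂μ) - c‖ₑ := by
  set I := ∫⁻ y, ENNReal.ofReal (g y) ∂μ
  rcases eq_or_ne I ∞ with htop | hfin
  · simp [htop]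
  rw [integral_eq_lintegral_of_nonneg_ae (.of_forall hg0) hg]
  calc ENNReal.ofReal c ≤ ENNReal.ofReal (I.toReal + |I.toReal - c|) :=
        ENNReal.ofReal_le_ofReal (by linarith [neg_abs_le (I.toReal - c)])
    _ ≤ ENNReal.ofReal I.toReal + ENNReal.ofReal |I.toReal - c| := ENNReal.ofReal_add_le
    _ = I + ‖I.toReal - c‖ₑ := by rw [ofReal_toReal hfin, Real.enorm_eq_ofReal_abs]

theorem rpow_one_div_le_mul_rpow_half_mul_rpow_half {p : ℝ} (hp1 : 1 < p) (hp2 : p ≤ 2)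
    {E A F Δ c : ℝ≥0∞} (hE : E ≤ (c * A) ^ (p / 2) * (2 ^ p * F ^ p) ^ ((2 - p) / 2))
    (hA : A ≤ 2 * (F ^ (p - 1) * Δ)) :
    E ^ (1 / p) ≤ (c * 2 ^ (3 - p)) ^ (1 / 2 : ℝ) * F ^ (1 / 2 : ℝ) * Δ ^ (1 / 2 : ℝ) := by
  have hp0 : 0 < p := by linarith
  have htwo : (2 : ℝ≥0∞) * 2 ^ (2 - p) = 2 ^ (3 - p) := by
    rw [show 3 - p = 1 + (2 - p) by ring, ENNReal.rpow_add _ _ two_ne_zero ofNat_ne_top,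
      ENNReal.rpow_one]
  have hF : F ^ (p - 1) * F ^ (2 - p) = F := by
    rw [← ENNReal.rpow_add_of_nonneg _ _ (by linarith) (by linarith),
      show p - 1 + (2 - p) = 1 by ring, ENNReal.rpow_one]
  have hB : (2 ^ p * F ^ p) ^ ((2 - p) / 2 * (1 / p)) = ((2 * F) ^ (2 - p)) ^ (1 / 2 : ℝ) := by
    rw [← ENNReal.mul_rpow_of_nonneg _ _ hp0.le, ← ENNReal.rpow_mul, ← ENNReal.rpow_mul]
    congr 1
    field_simp
  calc E ^ (1 / p)
      ≤ ((c * (2 * (F ^ (p - 1) * Δ))) ^ (p / 2) * (2 ^ p * F ^ p) ^ ((2 - p) / 2)) ^ (1 / p) := by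
        gcongr
        exact hE.trans (by gcongr)
    _ = (c * (2 * (F ^ (p - 1) * Δ)) * (2 * F) ^ (2 - p)) ^ (1 / 2 : ℝ) := by
        rw [ENNReal.mul_rpow_of_nonneg _ _ (by positivity), ← ENNReal.rpow_mul, ← ENNReal.rpow_mul,
          hB, show p / 2 * (1 / p) = 1 / 2 by field_simp,
          ← ENNReal.mul_rpow_of_nonneg _ _ (by norm_num)]
    _ = (c * 2 ^ (3 - p) * F * Δ) ^ (1 / 2 : ℝ) := by
        rw [ENNReal.mul_rpow_of_nonneg _ _ (by linarith : 0 ≤ 2 - p), ← htwo]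
        congr 1
        calc _ = c * (2 * 2 ^ (2 - p)) * (F ^ (p - 1) * F ^ (2 - p)) * Δ := by ring
          _ = _ := by rw [hF]
    _ = (c * 2 ^ (3 - p)) ^ (1 / 2 : ℝ) * F ^ (1 / 2 : ℝ) * Δ ^ (1 / 2 : ℝ) := by
        rw [ENNReal.mul_rpow_of_nonneg _ _ (by norm_num),
          ENNReal.mul_rpow_of_nonneg _ _ (by norm_num)]

def heatKernelMeasure (μ : Measure X) (K : ℝ → X → X → ℝ) (t : ℝ) : Measure (X × X) :=
  (μ.prod μ).withDensity fun z => ENNReal.ofReal (K t z.1 z.2)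

/-- `∬ p_t(x,y) (u(x) - u(y)) (v(x) - v(y))`, provided the integrand is nonnegative
(`ENNReal.ofReal` truncates negative values), e.g. when `v` is a monotone function of `u`. -/
def dirichletPairing (μ : Measure X) (K : ℝ → X → X → ℝ) (t : ℝ) (u v : X → ℝ) : ℝ≥0∞ :=
  ∫⁻ z, ENNReal.ofReal ((u z.1 - u z.2) * (v z.1 - v z.2)) ∂heatKernelMeasure μ K t

theorem besovEnergy_congr_ae {μ : Measure X} {K : ℝ → X → X → ℝ} {p t : ℝ} {f g : X → ℝ}
    (hfg : f =ᵐ[μ] g) : besovEnergy μ K p t f = besovEnergy μ K p t g := by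
  refine lintegral_congr_ae ?_
  filter_upwards [hfg] with x hx
  refine lintegral_congr_ae ?_
  filter_upwards [hfg] with y hy
  rw [hx, hy]

theorem heatOp_congr_ae {μ : Measure X} {K : ℝ → X → X → ℝ} {t : ℝ} {f g : X → ℝ}
    (hfg : f =ᵐ[μ] g) : heatOp μ K t f = heatOp μ K t g := by
  ext x
  refine integral_congr_ae ?_
  filter_upwards [hfg] with y hy
  rw [hy]

namespace IsHeatKernel

variable {μ : Measure X} {K : ℝ → X → X → ℝ} {t p : ℝ} {f : X → ℝ}

theorem lintegral_ofReal_eq_one (hK : IsHeatKernel μ K) (ht : 0 < t) :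
    ∀ᵐ x ∂μ, ∫⁻ y, ENNReal.ofReal (K t x y) ∂μ = 1 := by
  filter_upwards [hK.conservative t ht] with x hx
  have hint : Integrable (K t x) μ := by
    by_contra h
    simp [integral_undef h] at hx
  rw [← ofReal_integral_eq_lintegral_ofReal hint (.of_forall (hK.nonneg t x)), hx,
    ENNReal.ofReal_one]

variable [SFinite μ]

theorem lintegral_heatKernelMeasure (hK : IsHeatKernel μ K) {g : X × X → ℝ≥0∞}
    (hg : Measurable g) : ∫⁻ z, g z ∂heatKernelMeasure μ K t =
      ∫⁻ x, ∫⁻ y, ENNReal.ofReal (K t x y) * g (x, y) ∂μ ∂μ := by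
  rw [heatKernelMeasure, lintegral_withDensity_eq_lintegral_mul _
    (hK.measurable t).ennreal_ofReal hg, lintegral_prod _
    ((hK.measurable t).ennreal_ofReal.mul hg).aemeasurable]
  rfl

theorem map_fst_heatKernelMeasure (hK : IsHeatKernel μ K) (ht : 0 < t) :
    (heatKernelMeasure μ K t).map Prod.fst = μ := by
  ext s hs
  rw [Measure.map_apply measurable_fst hs, ← Set.prod_univ, heatKernelMeasure,
    withDensity_apply _ (hs.prod .univ), setLIntegral_prod _
      (hK.measurable t).ennreal_ofReal.aemeasurable, Measure.restrict_univ, ← setLIntegral_one]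
  refine setLIntegral_congr_fun_ae hs ?_
  filter_upwards [hK.lintegral_ofReal_eq_one ht] with x hx _ using hx

theorem map_swap_heatKernelMeasure (hK : IsHeatKernel μ K) :
    (heatKernelMeasure μ K t).map Prod.swap = heatKernelMeasure μ K t := by
  ext s hs
  rw [Measure.map_apply measurable_swap hs, heatKernelMeasure, withDensity_apply _ hs,
    withDensity_apply _ (measurable_swap hs)]
  conv_rhs => rw [← Measure.prod_swap,
    setLIntegral_map hs (hK.measurable t).ennreal_ofReal measurable_swap]
  simp only [Prod.fst_swap, Prod.snd_swap, hK.symm t]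

theorem map_snd_heatKernelMeasure (hK : IsHeatKernel μ K) (ht : 0 < t) :
    (heatKernelMeasure μ K t).map Prod.snd = μ := by
  rw [show @Prod.snd X X = Prod.fst ∘ Prod.swap from rfl,
    ← Measure.map_map measurable_fst measurable_swap, hK.map_swap_heatKernelMeasure,
    hK.map_fst_heatKernelMeasure ht]

theorem lintegral_comp_fst (hK : IsHeatKernel μ K) (ht : 0 < t) {g : X → ℝ≥0∞}
    (hg : Measurable g) : ∫⁻ z, g z.1 ∂heatKernelMeasure μ K t = ∫⁻ x, g x ∂μ := by
  rw [← lintegral_map hg measurable_fst, hK.map_fst_heatKernelMeasure ht]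

theorem lintegral_comp_snd (hK : IsHeatKernel μ K) (ht : 0 < t) {g : X → ℝ≥0∞}
    (hg : Measurable g) : ∫⁻ z, g z.2 ∂heatKernelMeasure μ K t = ∫⁻ x, g x ∂μ := by
  rw [← lintegral_map hg measurable_snd, hK.map_snd_heatKernelMeasure ht]

theorem lintegral_comp_swap (hK : IsHeatKernel μ K) {g : X × X → ℝ≥0∞} (hg : Measurable g) :
    ∫⁻ z, g z.swap ∂heatKernelMeasure μ K t = ∫⁻ z, g z ∂heatKernelMeasure μ K t := by
  rw [← lintegral_map hg measurable_swap, hK.map_swap_heatKernelMeasure]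

theorem besovEnergy_eq_lintegral (hK : IsHeatKernel μ K) (hf : Measurable f) :
    besovEnergy μ K p t f =
      ∫⁻ z, ENNReal.ofReal (|f z.1 - f z.2| ^ p) ∂heatKernelMeasure μ K t := by
  rw [hK.lintegral_heatKernelMeasure (by fun_prop), besovEnergy]
  simp only [mul_comm]

theorem measurable_heatOp (hK : IsHeatKernel μ K) (hf : Measurable f) :
    Measurable (heatOp μ K t f) :=
  ((hK.measurable t).mul (hf.comp measurable_snd)).stronglyMeasurable
    |>.integral_prod_right' |>.measurable

theorem lintegral_ofReal_add_rpow_le (hK : IsHeatKernel μ K) (ht : 0 < t) (hp : 1 ≤ p)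
    (hf : Measurable f) (hf0 : 0 ≤ f) :
    ∫⁻ z, ENNReal.ofReal ((f z.1 + f z.2) ^ p) ∂heatKernelMeasure μ K t ≤
      2 ^ p * eLpNorm f (ENNReal.ofReal p) μ ^ p := by
  calc ∫⁻ z, ENNReal.ofReal ((f z.1 + f z.2) ^ p) ∂heatKernelMeasure μ K t
      = ∫⁻ z, (‖f z.1‖ₑ + ‖f z.2‖ₑ) ^ p ∂heatKernelMeasure μ K t := by
        refine lintegral_congr fun z => ?_
        rw [Real.enorm_eq_ofReal (hf0 _), Real.enorm_eq_ofReal (hf0 _),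
          ← ENNReal.ofReal_add (hf0 _) (hf0 _),
          ENNReal.ofReal_rpow_of_nonneg (add_nonneg (hf0 _) (hf0 _)) (by linarith)]
    _ ≤ ∫⁻ z, 2 ^ (p - 1) * (‖f z.1‖ₑ ^ p + ‖f z.2‖ₑ ^ p) ∂heatKernelMeasure μ K t :=
        lintegral_mono fun z => ENNReal.rpow_add_le_mul_rpow_add_rpow _ _ hp
    _ = 2 ^ p * eLpNorm f (ENNReal.ofReal p) μ ^ p := by
        rw [lintegral_const_mul _ (by fun_prop), lintegral_add_left (by fun_prop),
          hK.lintegral_comp_fst ht (g := (‖f ·‖ₑ ^ p)) (by fun_prop),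
          hK.lintegral_comp_snd ht (g := (‖f ·‖ₑ ^ p)) (by fun_prop),
          lintegral_enorm_rpow_eq_eLpNorm_rpow (by linarith), ← two_mul, ← mul_assoc]
        congr 1
        conv_rhs => rw [← sub_add_cancel p 1, ENNReal.rpow_add _ _ two_ne_zero ofNat_ne_top,
          ENNReal.rpow_one]

theorem besovEnergy_le_dirichletPairing_mul (hK : IsHeatKernel μ K) (ht : 0 < t) (hp1 : 1 < p)
    (hp2 : p ≤ 2) (hf : Measurable f) (hf0 : 0 ≤ f) :
    besovEnergy μ K p t f ≤
      (ENNReal.ofReal (p - 1)⁻¹ * dirichletPairing μ K t f (fun x => f x ^ (p - 1))) ^ (p / 2) *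
        (2 ^ p * eLpNorm f (ENNReal.ofReal p) μ ^ p) ^ ((2 - p) / 2) := by
  have hpairing : ∫⁻ z, ENNReal.ofReal ((f z.1 - f z.2) * (f z.1 ^ (p - 1) - f z.2 ^ (p - 1)) /
      (p - 1)) ∂heatKernelMeasure μ K t =
      ENNReal.ofReal (p - 1)⁻¹ * dirichletPairing μ K t f (fun x => f x ^ (p - 1)) := by
    simp_rw [div_eq_inv_mul, ENNReal.ofReal_mul (inv_nonneg.2 (sub_nonneg.2 hp1.le))]
    exact lintegral_const_mul _ (by fun_prop)
  rw [hK.besovEnergy_eq_lintegral hf]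
  calc ∫⁻ z, ENNReal.ofReal (|f z.1 - f z.2| ^ p) ∂heatKernelMeasure μ K t
      ≤ ∫⁻ z, ENNReal.ofReal ((f z.1 - f z.2) * (f z.1 ^ (p - 1) - f z.2 ^ (p - 1)) / (p - 1))
          ^ (p / 2) * ENNReal.ofReal ((f z.1 + f z.2) ^ p) ^ ((2 - p) / 2)
          ∂heatKernelMeasure μ K t :=
        lintegral_mono fun z => ofReal_abs_sub_rpow_le hp1 hp2 (hf0 _) (hf0 _)
    _ ≤ (∫⁻ z, ENNReal.ofReal ((f z.1 - f z.2) * (f z.1 ^ (p - 1) - f z.2 ^ (p - 1)) / (p - 1))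
          ∂heatKernelMeasure μ K t) ^ (p / 2) *
        (∫⁻ z, ENNReal.ofReal ((f z.1 + f z.2) ^ p) ∂heatKernelMeasure μ K t) ^ ((2 - p) / 2) :=
        ENNReal.lintegral_mul_norm_pow_le (by fun_prop) (by fun_prop) (by linarith)
          (by linarith) (by ring)
    _ ≤ _ := by
        rw [hpairing]
        gcongr
        exact hK.lintegral_ofReal_add_rpow_le ht hp1.le hf hf0

theorem dirichletPairing_rpow_sub_one_add (hK : IsHeatKernel μ K) (ht : 0 < t) (hp : 1 < p)
    (hf : Measurable f) (hf0 : 0 ≤ f) :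
    dirichletPairing μ K t f (fun x => f x ^ (p - 1)) +
        2 * ∫⁻ z, ENNReal.ofReal (f z.1 ^ (p - 1) * f z.2) ∂heatKernelMeasure μ K t =
      2 * eLpNorm f (ENNReal.ofReal p) μ ^ p := by
  have hpoint : ∀ a b : ℝ, 0 ≤ a → 0 ≤ b →
      ENNReal.ofReal ((a - b) * (a ^ (p - 1) - b ^ (p - 1))) +
        (ENNReal.ofReal (a ^ (p - 1) * b) + ENNReal.ofReal (b ^ (p - 1) * a)) =
      ‖a‖ₑ ^ p + ‖b‖ₑ ^ p := by
    intro a b ha hb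
    rw [Real.enorm_eq_ofReal ha, Real.enorm_eq_ofReal hb,
      ENNReal.ofReal_rpow_of_nonneg ha (by linarith),
      ENNReal.ofReal_rpow_of_nonneg hb (by linarith),
      ← ENNReal.ofReal_add (by positivity) (by positivity),
      ← ENNReal.ofReal_add (sub_mul_rpow_sub_rpow_nonneg (by linarith) ha hb) (by positivity),
      ← ENNReal.ofReal_add (by positivity) (by positivity),
      rpow_eq_rpow_sub_one_mul (p := p) (by linarith) ha,
      rpow_eq_rpow_sub_one_mul (p := p) (by linarith) hb]
    congr 1
    ring
  have hswap : ∫⁻ z, ENNReal.ofReal (f z.2 ^ (p - 1) * f z.1) ∂heatKernelMeasure μ K t =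
      ∫⁻ z, ENNReal.ofReal (f z.1 ^ (p - 1) * f z.2) ∂heatKernelMeasure μ K t :=
    hK.lintegral_comp_swap (g := fun z => ENNReal.ofReal (f z.1 ^ (p - 1) * f z.2))
      (by fun_prop)
  calc _ = ∫⁻ z, ENNReal.ofReal ((f z.1 - f z.2) * (f z.1 ^ (p - 1) - f z.2 ^ (p - 1))) +
          (ENNReal.ofReal (f z.1 ^ (p - 1) * f z.2) + ENNReal.ofReal (f z.2 ^ (p - 1) * f z.1))
          ∂heatKernelMeasure μ K t := by
        rw [lintegral_add_left (by fun_prop), lintegral_add_left (by fun_prop), hswap, two_mul]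
        rfl
    _ = ∫⁻ z, ‖f z.1‖ₑ ^ p + ‖f z.2‖ₑ ^ p ∂heatKernelMeasure μ K t :=
        lintegral_congr fun z => hpoint _ _ (hf0 _) (hf0 _)
    _ = 2 * eLpNorm f (ENNReal.ofReal p) μ ^ p := by
        rw [lintegral_add_left (by fun_prop),
          hK.lintegral_comp_fst ht (g := (‖f ·‖ₑ ^ p)) (by fun_prop),
          hK.lintegral_comp_snd ht (g := (‖f ·‖ₑ ^ p)) (by fun_prop),
          lintegral_enorm_rpow_eq_eLpNorm_rpow (by linarith), two_mul]

theorem eLpNorm_rpow_le_lintegral_add (hK : IsHeatKernel μ K) (hp : 1 ≤ p) (hf : Measurable f)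
    (hf0 : 0 ≤ f) : eLpNorm f (ENNReal.ofReal p) μ ^ p ≤
      ∫⁻ z, ENNReal.ofReal (f z.1 ^ (p - 1) * f z.2) ∂heatKernelMeasure μ K t +
        ∫⁻ x, ‖f x‖ₑ ^ (p - 1) * ‖heatOp μ K t f x - f x‖ₑ ∂μ := by
  have hKf : ∀ x, Measurable fun y => K t x y * f y := fun x =>
    ((hK.measurable t).comp measurable_prodMk_left).mul hf
  have hPf : Measurable fun x => ∫⁻ y, ENNReal.ofReal (K t x y * f y) ∂μ :=
    ((hK.measurable t).mul (hf.comp measurable_snd)).ennreal_ofReal.lintegral_prod_right'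
  have hR : ∫⁻ z, ENNReal.ofReal (f z.1 ^ (p - 1) * f z.2) ∂heatKernelMeasure μ K t =
      ∫⁻ x, ‖f x‖ₑ ^ (p - 1) * ∫⁻ y, ENNReal.ofReal (K t x y * f y) ∂μ ∂μ := by
    rw [hK.lintegral_heatKernelMeasure (by fun_prop)]
    refine lintegral_congr fun x => ?_
    rw [← lintegral_const_mul _ (hKf x).ennreal_ofReal]
    refine lintegral_congr fun y => ?_
    rw [Real.enorm_eq_ofReal (hf0 x), ENNReal.ofReal_rpow_of_nonneg (hf0 x) (by linarith),
      ← ENNReal.ofReal_mul (hK.nonneg t x y), ← ENNReal.ofReal_mul (Real.rpow_nonneg (hf0 x) _)]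
    congr 1
    ring
  calc eLpNorm f (ENNReal.ofReal p) μ ^ p = ∫⁻ x, ‖f x‖ₑ ^ (p - 1) * ENNReal.ofReal (f x) ∂μ := by
        rw [← lintegral_enorm_rpow_eq_eLpNorm_rpow (by linarith)]
        refine lintegral_congr fun x => ?_
        rw [← Real.enorm_eq_ofReal (hf0 x)]
        conv_lhs => rw [← sub_add_cancel p 1]
        rw [ENNReal.rpow_add_of_nonneg _ _ (by linarith) zero_le_one, ENNReal.rpow_one]
    _ ≤ ∫⁻ x, ‖f x‖ₑ ^ (p - 1) * (∫⁻ y, ENNReal.ofReal (K t x y * f y) ∂μ +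
          ‖heatOp μ K t f x - f x‖ₑ) ∂μ := by
        gcongr with x
        exact ofReal_le_lintegral_add_enorm_integral_sub
          (hKf x).aestronglyMeasurable
          (fun y => mul_nonneg (hK.nonneg t x y) (hf0 y)) (f x)
    _ = _ := by
        simp only [hR, mul_add]
        exact lintegral_add_left ((hf.enorm.pow_const _).mul hPf) _

theorem dirichletPairing_rpow_sub_one_le (hK : IsHeatKernel μ K) (ht : 0 < t) (hp : 1 < p)
    (hf : Measurable f) (hf0 : 0 ≤ f) (hfin : eLpNorm f (ENNReal.ofReal p) μ ≠ ∞) :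
    dirichletPairing μ K t f (fun x => f x ^ (p - 1)) ≤
      2 * (eLpNorm f (ENNReal.ofReal p) μ ^ (p - 1) *
        eLpNorm (fun x => heatOp μ K t f x - f x) (ENNReal.ofReal p) μ) := by
  set R := ∫⁻ z, ENNReal.ofReal (f z.1 ^ (p - 1) * f z.2) ∂heatKernelMeasure μ K t
  have hcross := hK.dirichletPairing_rpow_sub_one_add ht hp hf hf0
  have hRfin : 2 * R ≠ ∞ := by
    refine ne_top_of_le_ne_top ?_ (hcross ▸ le_add_self)
    exact ENNReal.mul_ne_top ofNat_ne_top (ENNReal.rpow_ne_top_of_nonneg (by linarith) hfin)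
  refine ENNReal.le_of_add_le_add_right hRfin ?_
  calc dirichletPairing μ K t f (fun x => f x ^ (p - 1)) + 2 * R
      = 2 * eLpNorm f (ENNReal.ofReal p) μ ^ p := hcross
    _ ≤ 2 * (R + ∫⁻ x, ‖f x‖ₑ ^ (p - 1) * ‖heatOp μ K t f x - f x‖ₑ ∂μ) := by
        gcongr
        exact hK.eLpNorm_rpow_le_lintegral_add hp.le hf hf0
    _ ≤ 2 * (R + eLpNorm f (ENNReal.ofReal p) μ ^ (p - 1) *
          eLpNorm (fun x => heatOp μ K t f x - f x) (ENNReal.ofReal p) μ) := by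
        gcongr
        exact lintegral_enorm_rpow_sub_one_mul_le hp.le hf.aemeasurable
          ((hK.measurable_heatOp hf).sub hf).aemeasurable
    _ = _ := by ring

theorem besovEnergy_rpow_le (hK : IsHeatKernel μ K) (ht : 0 < t) (hp1 : 1 < p) (hp2 : p ≤ 2)
    (hf : Measurable f) (hf0 : 0 ≤ f) (hfin : eLpNorm f (ENNReal.ofReal p) μ ≠ ∞) :
    besovEnergy μ K p t f ^ (1 / p) ≤
      ENNReal.ofReal ((2 ^ (3 - p) / (p - 1)) ^ (1 / 2 : ℝ)) *
        eLpNorm f (ENNReal.ofReal p) μ ^ (1 / 2 : ℝ) *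
        eLpNorm (fun x => heatOp μ K t f x - f x) (ENNReal.ofReal p) μ ^ (1 / 2 : ℝ) := by
  have hC : ENNReal.ofReal ((2 ^ (3 - p) / (p - 1)) ^ (1 / 2 : ℝ)) =
      (ENNReal.ofReal (p - 1)⁻¹ * 2 ^ (3 - p)) ^ (1 / 2 : ℝ) := by
    rw [← ENNReal.ofReal_rpow_of_nonneg (by positivity) (by norm_num), div_eq_inv_mul,
      ENNReal.ofReal_mul (inv_nonneg.2 (by linarith)), ← ENNReal.ofReal_rpow_of_pos two_pos,
      ENNReal.ofReal_ofNat]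
  rw [hC]
  exact rpow_one_div_le_mul_rpow_half_mul_rpow_half hp1 hp2
    (hK.besovEnergy_le_dirichletPairing_mul ht hp1 hp2 hf hf0)
    (hK.dirichletPairing_rpow_sub_one_le ht hp1 hf hf0 hfin)

end IsHeatKernel

/-- **Dungey-type interpolation bound.** For `1 < p ≤ 2` there is a constant `C_p > 0`,
depending only on `p`, such that for every heat kernel, every nonnegative `f ∈ L^p(X,μ)`
and every `t > 0`,
`(∬ p_t(x,y)|f(x)−f(y)|^p)^{1/p} ≤ C_p ‖f‖_p^{1/2} ‖P_t f − f‖_p^{1/2}`. -/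
theorem dungey_interpolation (p : ℝ) (hp1 : 1 < p) (hp2 : p ≤ 2) :
    ∃ C : ℝ, 0 < C ∧
      ∀ (X : Type) [MetricSpace X] [MeasurableSpace X] [BorelSpace X]
        (μ : Measure X) [SigmaFinite μ] (K : ℝ → X → X → ℝ),
        IsHeatKernel μ K →
        ∀ f : X → ℝ, (∀ x, 0 ≤ f x) → MemLp f (ENNReal.ofReal p) μ →
        ∀ t : ℝ, 0 < t →
          besovEnergy μ K p t f ^ (1 / p) ≤
            ENNReal.ofReal C * eLpNorm f (ENNReal.ofReal p) μ ^ (1 / 2 : ℝ) *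
              eLpNorm (fun x => heatOp μ K t f x - f x) (ENNReal.ofReal p) μ ^ (1 / 2 : ℝ) := by
  refine ⟨(2 ^ (3 - p) / (p - 1)) ^ (1 / 2 : ℝ),
    Real.rpow_pos_of_pos (div_pos (by positivity) (by linarith)) _, ?_⟩
  intro X _ _ _ μ _ K hK f hf0 hf t ht
  obtain ⟨g, hgm, hg0, hfg⟩ :=
    hf.aestronglyMeasurable.aemeasurable.exists_measurable_nonneg (.of_forall hf0)
  have hdiff : (fun x => heatOp μ K t f x - f x) =ᵐ[μ] fun x => heatOp μ K t g x - g x := by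
    filter_upwards [hfg] with x hx
    rw [heatOp_congr_ae hfg, hx]
  rw [besovEnergy_congr_ae hfg, eLpNorm_congr_ae hfg, eLpNorm_congr_ae hdiff]
  exact hK.besovEnergy_rpow_le ht hp1 hp2 hgm hg0 (hf.ae_eq hfg).eLpNorm_ne_top

end BesovDirichlet
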